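/- Pullback by the twisting map preserves the Schwartz space: if f ∈ 𝒮(ℝ^{n+2}) (Schwartz functions in variables (a, v, ξ), v ∈ ℝⁿ) and θ ∈ ℝ, then the function (a,v,ξ) ↦ f(a, v/cosh(θξ), sinh(2θξ)/(2θ)) is again a Schwartz function. -/

import Mathlib

/-! The twisting map is smooth but not of temperate growth, since `sinh (2θξ) / (2θ)` and all its
derivatives grow exponentially in `ξ`. The growth is, however, controlled by the image point:
`‖p‖` is polynomially bounded in `‖twist θ p‖` because `|ξ| ≤ |sinh (2θξ) / (2θ)|` and
`cosh (θξ) ≤ cosh (2θξ) ≤ 1 + |sinh (2θξ)|`; the derivatives of `sinh (2θξ) / (2θ)` are bounded by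
`cosh (2θξ)`, hence linearly in `‖twist θ p‖`; and those of `v / cosh (θξ)` are polynomial in `p`,
because the derivatives of `sech` are of the form `P (tanh) * sech`. So every derivative of
`twist θ` at `p` is polynomially bounded in `‖twist θ p‖`, and by Faà di Bruno the derivatives of
`f ∘ twist θ` at `p` are those of `f` at `twist θ p` times such a polynomial, which the rapid decay
of `f` absorbs. -/

/-- `φ_θ(ξ) := sinh(2θξ)/(2θ)` for `θ ≠ 0`, and `φ₀ = id`. -/
noncomputable def phiMap (θ ξ : ℝ) : ℝ :=
  if θ = 0 then ξ else Real.sinh (2 * θ * ξ) / (2 * θ)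

/-- The twisting map `(a,v,ξ) ↦ (a, v/cosh(θξ), sinh(2θξ)/(2θ))`. -/
noncomputable def twist {V : Type*} [AddCommGroup V] [Module ℝ V] (θ : ℝ)
    (p : ℝ × V × ℝ) : ℝ × V × ℝ :=
  (p.1, (Real.cosh (θ * p.2.2))⁻¹ • p.2.1, phiMap θ p.2.2)

open Real SchwartzMap
open scoped ContDiff Nat

theorem ContinuousLinearMap.norm_iteratedFDeriv_comp_right_le {E F G : Type*}
    [NormedAddCommGroup E] [NormedSpace ℝ E] [NormedAddCommGroup F] [NormedSpace ℝ F]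
    [NormedAddCommGroup G] [NormedSpace ℝ G] (L : E →L[ℝ] F) {f : F → G} {n : WithTop ℕ∞}
    (hf : ContDiff ℝ n f) (x : E) {i : ℕ} (hi : i ≤ n) :
    ‖iteratedFDeriv ℝ i (f ∘ L) x‖ ≤ ‖iteratedFDeriv ℝ i f (L x)‖ * ‖L‖ ^ i := by
  rw [L.iteratedFDeriv_comp_right hf x hi]
  simpa using (iteratedFDeriv ℝ i f (L x)).norm_compContinuousLinearMap_le fun _ => L

/-- Unlike `SchwartzMap.compCLM`, this only asks the derivatives of `g` to be polynomially bounded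
in `‖g x‖` rather than in `‖x‖`, which allows for exponentially growing maps. -/
theorem SchwartzMap.exists_eq_comp {D E F : Type*} [NormedAddCommGroup D] [NormedSpace ℝ D]
    [NormedAddCommGroup E] [NormedSpace ℝ E] [NormedAddCommGroup F] [NormedSpace ℝ F]
    (f : 𝓢(E, F)) {g : D → E} (hg : ContDiff ℝ ∞ g)
    (hg_deriv : ∀ n : ℕ, ∃ (k : ℕ) (C : ℝ), ∀ i ≤ n, ∀ x,
      ‖iteratedFDeriv ℝ i g x‖ ≤ C * (1 + ‖g x‖) ^ k)
    (hg_upper : ∃ (k : ℕ) (C : ℝ), ∀ x, 1 + ‖x‖ ≤ C * (1 + ‖g x‖) ^ k) :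
    ∃ h : 𝓢(D, F), ∀ x, h x = f (g x) := by
  obtain ⟨ku, Cu, hu⟩ := hg_upper
  refine ⟨⟨f ∘ g, (f.smooth ⊤).comp hg, fun k n => ?_⟩, fun _ => rfl⟩
  obtain ⟨kd, Cd, hd⟩ := hg_deriv n
  set K := ku * k + kd * n
  set S := (Finset.Iic (K, n)).sup (fun m => SchwartzMap.seminorm ℝ m.1 m.2) f
  refine ⟨n ! * (2 ^ K * S) * max 1 Cd ^ n * Cu ^ k, fun x => ?_⟩
  set w := 1 + ‖g x‖
  have hw : 1 ≤ w := le_add_of_nonneg_right (norm_nonneg _)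
  have hf_bound : ∀ i ≤ n, ‖iteratedFDeriv ℝ i f (g x)‖ ≤ 2 ^ K * S / w ^ K := fun i hi => by
    rw [le_div_iff₀' (by positivity)]
    exact one_add_le_sup_seminorm_apply (m := (K, n)) le_rfl hi f (g x)
  have hg_bound : ∀ i, 1 ≤ i → i ≤ n → ‖iteratedFDeriv ℝ i g x‖ ≤ (max 1 Cd * w ^ kd) ^ i :=
    fun i hi1 hin => (hd i hin x).trans <| by
      refine le_trans ?_ (le_self_pow₀ (one_le_mul_of_one_le_of_one_le (le_max_left _ _)
        (one_le_pow₀ hw)) (by omega))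
      gcongr
      exact le_max_right _ _
  have hx : ‖x‖ ^ k ≤ Cu ^ k * w ^ (ku * k) := by
    rw [pow_mul, ← mul_pow]
    exact pow_le_pow_left₀ (norm_nonneg x) ((le_add_of_nonneg_left zero_le_one).trans (hu x)) k
  calc ‖x‖ ^ k * ‖iteratedFDeriv ℝ n (f ∘ g) x‖
      ≤ Cu ^ k * w ^ (ku * k) * (n ! * (2 ^ K * S / w ^ K) * (max 1 Cd * w ^ kd) ^ n) :=
        mul_le_mul hx
          (norm_iteratedFDeriv_comp_le (f.smooth ⊤) hg (mod_cast le_top) x hf_bound hg_bound)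
          (norm_nonneg _) ((pow_nonneg (norm_nonneg x) k).trans hx)
    _ = n ! * (2 ^ K * S) * max 1 Cd ^ n * Cu ^ k := by
        field_simp
        ring

namespace Real

theorem hasDerivAt_tanh (x : ℝ) : HasDerivAt tanh ((cosh x)⁻¹ ^ 2) x := by
  rw [show tanh = fun x => sinh x / cosh x from funext tanh_eq_sinh_div_cosh]
  refine ((hasDerivAt_sinh x).div (hasDerivAt_cosh x) (cosh_pos x).ne').congr_deriv ?_
  field_simp
  linarith [cosh_sq x]

theorem hasDerivAt_inv_cosh (x : ℝ) :
    HasDerivAt (fun x => (cosh x)⁻¹) (-tanh x * (cosh x)⁻¹) x := by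
  refine ((hasDerivAt_cosh x).inv (cosh_pos x).ne').congr_deriv ?_
  rw [tanh_eq_sinh_div_cosh]
  field_simp

theorem inv_cosh_sq (x : ℝ) : (cosh x)⁻¹ ^ 2 = 1 - tanh x ^ 2 := by
  rw [tanh_eq_sinh_div_cosh]
  field_simp
  linarith [cosh_sq x]

theorem exists_iteratedDeriv_inv_cosh_eq (m : ℕ) : ∃ P : Polynomial ℝ,
    iteratedDeriv m (fun x => (cosh x)⁻¹) = fun x => P.eval (tanh x) * (cosh x)⁻¹ := by
  induction m with
  | zero => exact ⟨1, by simp⟩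
  | succ m ih =>
    obtain ⟨P, hP⟩ := ih
    -- `sech' = -tanh * sech` and `tanh' = sech ^ 2 = 1 - tanh ^ 2`
    refine ⟨P.derivative * (1 - Polynomial.X ^ 2) - P * Polynomial.X, funext fun x => ?_⟩
    rw [iteratedDeriv_succ, hP]
    refine (((P.hasDerivAt _).comp x (hasDerivAt_tanh x)).mul
      (hasDerivAt_inv_cosh x)).deriv.trans ?_
    simp only [Function.comp_apply, Polynomial.eval_mul, Polynomial.eval_sub, Polynomial.eval_one,
      Polynomial.eval_pow, Polynomial.eval_X, inv_cosh_sq]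
    ring

theorem hasTemperateGrowth_inv_cosh : Function.HasTemperateGrowth fun x => (cosh x)⁻¹ := by
  refine ⟨contDiff_cosh.inv fun x => (cosh_pos x).ne', fun m => ?_⟩
  obtain ⟨P, hP⟩ := exists_iteratedDeriv_inv_cosh_eq m
  obtain ⟨C, hC⟩ :=
    isCompact_Icc.exists_bound_of_continuousOn (P.continuous.continuousOn (s := Set.Icc (-1) 1))
  refine ⟨0, C, fun x => ?_⟩
  have htanh : tanh x ∈ Set.Icc (-1) 1 := ⟨(neg_one_lt_tanh x).le, (tanh_lt_one x).le⟩
  have hinv : ‖(cosh x)⁻¹‖ ≤ 1 := by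
    rw [norm_inv, norm_of_nonneg (cosh_pos x).le]
    exact inv_le_one_of_one_le₀ (one_le_cosh x)
  rw [norm_iteratedFDeriv_eq_norm_iteratedDeriv, hP, norm_mul, pow_zero, mul_one]
  simpa using mul_le_mul (hC _ htanh) hinv (norm_nonneg _) ((norm_nonneg _).trans (hC _ htanh))

theorem abs_le_abs_sinh (x : ℝ) : |x| ≤ |sinh x| := by
  rw [abs_sinh]
  exact self_le_sinh_iff.2 (abs_nonneg x)

theorem cosh_le_one_add_abs_sinh (x : ℝ) : cosh x ≤ 1 + |sinh x| := by
  nlinarith [cosh_sq x, sq_abs (sinh x), abs_nonneg (sinh x), cosh_pos x]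

theorem abs_sinh_le_cosh (x : ℝ) : |sinh x| ≤ cosh x := by
  nlinarith [cosh_sq x, sq_abs (sinh x), abs_nonneg (sinh x), cosh_pos x]

theorem abs_iteratedDeriv_sinh_le_cosh (n : ℕ) (x : ℝ) : |iteratedDeriv n sinh x| ≤ cosh x := by
  obtain ⟨k, rfl | rfl⟩ := n.even_or_odd'
  · rw [iteratedDeriv_even_sinh]
    exact abs_sinh_le_cosh x
  · rw [iteratedDeriv_odd_sinh, abs_of_pos (cosh_pos x)]

end Real

lemma phiMap_of_ne_zero {θ : ℝ} (hθ : θ ≠ 0) : phiMap θ = fun ξ => sinh (2 * θ * ξ) / (2 * θ) :=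
  funext fun _ => if_neg hθ

@[simp] lemma phiMap_zero : phiMap 0 = id := funext fun _ => if_pos rfl

lemma contDiff_phiMap (θ : ℝ) : ContDiff ℝ ∞ (phiMap θ) := by
  rcases eq_or_ne θ 0 with rfl | hθ
  · simpa using contDiff_id
  · rw [phiMap_of_ne_zero hθ]
    fun_prop

lemma abs_le_abs_phiMap (θ ξ : ℝ) : |ξ| ≤ |phiMap θ ξ| := by
  rcases eq_or_ne θ 0 with rfl | hθ
  · simp
  · rw [phiMap_of_ne_zero hθ, abs_div, le_div_iff₀ (abs_pos.2 (mul_ne_zero two_ne_zero hθ)),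
      mul_comm, ← abs_mul]
    exact abs_le_abs_sinh _

lemma cosh_le_one_add_abs_phiMap (θ ξ : ℝ) : cosh (θ * ξ) ≤ 1 + 2 * |θ| * |phiMap θ ξ| := by
  rcases eq_or_ne θ 0 with rfl | hθ
  · simp
  · calc cosh (θ * ξ) ≤ cosh (2 * θ * ξ) := by
          rw [cosh_le_cosh, mul_assoc, abs_mul 2, abs_two]
          linarith [abs_nonneg (θ * ξ)]
      _ ≤ 1 + |sinh (2 * θ * ξ)| := cosh_le_one_add_abs_sinh _
      _ = 1 + 2 * |θ| * |phiMap θ ξ| := by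
          rw [phiMap_of_ne_zero hθ, abs_div, abs_mul 2, abs_two]
          field_simp

lemma exists_abs_iteratedDeriv_phiMap_le (θ : ℝ) (n : ℕ) :
    ∃ C, ∀ i ≤ n, ∀ ξ, |iteratedDeriv i (phiMap θ) ξ| ≤ C * (1 + |phiMap θ ξ|) := by
  rcases eq_or_ne θ 0 with rfl | hθ
  · refine ⟨1, fun i _ ξ => ?_⟩
    rw [phiMap_zero, iteratedDeriv_id]
    split_ifs <;> simp [add_nonneg]
  · refine ⟨max 1 |2 * θ| ^ n * max 1 |2 * θ|⁻¹, fun i hi ξ => ?_⟩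
    have h2θ : 0 < |2 * θ| := abs_pos.2 (mul_ne_zero two_ne_zero hθ)
    have hsinh : |sinh (2 * θ * ξ)| = |2 * θ| * |phiMap θ ξ| := by
      rw [phiMap_of_ne_zero hθ, abs_div]
      field_simp
    have hM : |2 * θ| ^ i ≤ max 1 |2 * θ| ^ n :=
      (pow_le_pow_left₀ (abs_nonneg _) (le_max_right _ _) i).trans
        (pow_le_pow_right₀ (le_max_left _ _) hi)
    calc |iteratedDeriv i (phiMap θ) ξ|
        = |2 * θ| ^ i * |iteratedDeriv i sinh (2 * θ * ξ)| * |2 * θ|⁻¹ := by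
          rw [phiMap_of_ne_zero hθ, iteratedDeriv_div_const,
            iteratedDeriv_comp_const_mul contDiff_sinh, abs_div, abs_mul, abs_pow, div_eq_mul_inv]
      _ ≤ |2 * θ| ^ i * (1 + |2 * θ| * |phiMap θ ξ|) * |2 * θ|⁻¹ := by
          gcongr
          exact (abs_iteratedDeriv_sinh_le_cosh i _).trans
            (hsinh ▸ cosh_le_one_add_abs_sinh _)
      _ = |2 * θ| ^ i * (|2 * θ|⁻¹ + |phiMap θ ξ|) := by field_simp
      _ ≤ max 1 |2 * θ| ^ n * (max 1 |2 * θ|⁻¹ * (1 + |phiMap θ ξ|)) := by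
          gcongr
          nlinarith [le_max_left 1 |2 * θ|⁻¹, le_max_right 1 |2 * θ|⁻¹, abs_nonneg (phiMap θ ξ)]
      _ = _ := by ring

section Twist

variable {V : Type*} [NormedAddCommGroup V] [NormedSpace ℝ V]

lemma hasTemperateGrowth_twist_snd_fst (θ : ℝ) :
    Function.HasTemperateGrowth fun p : ℝ × V × ℝ => (twist θ p).2.1 :=
  let π₂ := ContinuousLinearMap.fst ℝ V ℝ ∘L ContinuousLinearMap.snd ℝ ℝ (V × ℝ)
  let π₃ := ContinuousLinearMap.snd ℝ V ℝ ∘L ContinuousLinearMap.snd ℝ ℝ (V × ℝ)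
  (hasTemperateGrowth_inv_cosh.comp (θ • π₃).hasTemperateGrowth).smul π₂.hasTemperateGrowth

lemma contDiff_twist_snd_snd (θ : ℝ) : ContDiff ℝ ∞ fun p : ℝ × V × ℝ => (twist θ p).2.2 :=
  (contDiff_phiMap θ).comp (contDiff_snd.comp contDiff_snd)

lemma contDiff_twist (θ : ℝ) : ContDiff ℝ ∞ (twist (V := V) θ) :=
  contDiff_fst.prodMk ((hasTemperateGrowth_twist_snd_fst θ).1.prodMk (contDiff_twist_snd_snd θ))

lemma norm_iteratedFDeriv_twist (θ : ℝ) (i : ℕ) (p : ℝ × V × ℝ) :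
    ‖iteratedFDeriv ℝ i (twist θ) p‖ =
      max ‖iteratedFDeriv ℝ i Prod.fst p‖
        (max ‖iteratedFDeriv ℝ i (fun p : ℝ × V × ℝ => (twist θ p).2.1) p‖
          ‖iteratedFDeriv ℝ i (fun p : ℝ × V × ℝ => (twist θ p).2.2) p‖) := by
  have hi : (i : WithTop ℕ∞) ≤ ∞ := mod_cast le_top
  have h₂ := (hasTemperateGrowth_twist_snd_fst (V := V) θ).1
  have h₃ := contDiff_twist_snd_snd (V := V) θ
  change ‖iteratedFDeriv ℝ i (fun p : ℝ × V × ℝ => (p.1, ((twist θ p).2.1, (twist θ p).2.2))) p‖ = _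
  rw [iteratedFDeriv_prodMk contDiff_fst.contDiffAt (h₂.prodMk h₃).contDiffAt hi,
    iteratedFDeriv_prodMk h₂.contDiffAt h₃.contDiffAt hi,
    ContinuousMultilinearMap.opNorm_prod, ContinuousMultilinearMap.opNorm_prod]

lemma abs_phiMap_le_norm_twist (θ : ℝ) (p : ℝ × V × ℝ) : |phiMap θ p.2.2| ≤ ‖twist θ p‖ :=
  (norm_snd_le (twist θ p).2).trans (norm_snd_le (twist θ p))

lemma exists_norm_iteratedFDeriv_twist_snd_snd_le (θ : ℝ) (n : ℕ) :
    ∃ C, ∀ i ≤ n, ∀ p : ℝ × V × ℝ,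
      ‖iteratedFDeriv ℝ i (fun p : ℝ × V × ℝ => (twist θ p).2.2) p‖ ≤ C * (1 + ‖twist θ p‖) := by
  obtain ⟨C, hC⟩ := exists_abs_iteratedDeriv_phiMap_le θ n
  refine ⟨max C 0, fun i hi p => ?_⟩
  let π₃ := ContinuousLinearMap.snd ℝ V ℝ ∘L ContinuousLinearMap.snd ℝ ℝ (V × ℝ)
  have hπ₃ : ‖π₃‖ ≤ 1 := (ContinuousLinearMap.opNorm_comp_le _ _).trans
    (mul_le_one₀ (ContinuousLinearMap.norm_snd_le ℝ V ℝ) (norm_nonneg _)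
      (ContinuousLinearMap.norm_snd_le ℝ ℝ (V × ℝ)))
  calc ‖iteratedFDeriv ℝ i (phiMap θ ∘ π₃) p‖
      ≤ |iteratedDeriv i (phiMap θ) p.2.2| * ‖π₃‖ ^ i := by
        rw [← norm_eq_abs, ← norm_iteratedFDeriv_eq_norm_iteratedDeriv]
        exact π₃.norm_iteratedFDeriv_comp_right_le (contDiff_phiMap θ) p (mod_cast le_top)
    _ ≤ C * (1 + |phiMap θ p.2.2|) * 1 :=
        mul_le_mul (hC i hi _) (pow_le_one₀ (norm_nonneg _) hπ₃) (by positivity)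
          ((abs_nonneg _).trans (hC i hi _))
    _ ≤ max C 0 * (1 + ‖twist θ p‖) := by
        rw [mul_one]
        exact mul_le_mul (le_max_left _ _) (by linarith [abs_phiMap_le_norm_twist θ p])
          (by positivity) (le_max_right _ _)

lemma one_add_norm_le_twist (θ : ℝ) (p : ℝ × V × ℝ) :
    1 + ‖p‖ ≤ (1 + 2 * |θ|) * (1 + ‖twist θ p‖) ^ 2 := by
  obtain ⟨a, v, ξ⟩ := p
  set t := ‖twist θ (a, v, ξ)‖
  have ht : 0 ≤ t := norm_nonneg _
  have ha : |a| ≤ t := norm_fst_le (twist θ (a, v, ξ))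
  have hξ : |ξ| ≤ t := (abs_le_abs_phiMap θ ξ).trans (abs_phiMap_le_norm_twist θ (a, v, ξ))
  have hv : ‖v‖ ≤ (1 + 2 * |θ| * t) * t := by
    have hw : ‖(cosh (θ * ξ))⁻¹ • v‖ ≤ t :=
      (norm_fst_le _).trans (norm_snd_le (twist θ (a, v, ξ)))
    rw [norm_smul, norm_inv, norm_of_nonneg (cosh_pos _).le, inv_mul_le_iff₀ (cosh_pos _)] at hw
    refine hw.trans (mul_le_mul_of_nonneg_right ?_ ht)
    grw [cosh_le_one_add_abs_phiMap θ ξ, abs_phiMap_le_norm_twist θ (a, v, ξ)]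
  have hp : ‖(a, v, ξ)‖ ≤ t + (1 + 2 * |θ| * t) * t := by
    have := (norm_nonneg v).trans hv
    simp only [Prod.norm_def, norm_eq_abs, max_le_iff]
    exact ⟨by linarith, by linarith, by linarith⟩
  nlinarith [abs_nonneg θ]

lemma exists_norm_iteratedFDeriv_twist_le (θ : ℝ) (n : ℕ) :
    ∃ (k : ℕ) (C : ℝ), ∀ i ≤ n, ∀ p : ℝ × V × ℝ,
      ‖iteratedFDeriv ℝ i (twist θ) p‖ ≤ C * (1 + ‖twist θ p‖) ^ k := by
  obtain ⟨k₁, C₁, hC₁, h₁⟩ :=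
    (ContinuousLinearMap.fst ℝ ℝ (V × ℝ)).hasTemperateGrowth.norm_iteratedFDeriv_le_uniform n
  obtain ⟨k₂, C₂, -, h₂⟩ :=
    (hasTemperateGrowth_twist_snd_fst (V := V) θ).norm_iteratedFDeriv_le_uniform n
  obtain ⟨C₃, h₃⟩ := exists_norm_iteratedFDeriv_twist_snd_snd_le (V := V) θ n
  set K := max 1 (max k₁ k₂)
  set C := max C₁ (max C₂ C₃)
  refine ⟨2 * K, C * (1 + 2 * |θ|) ^ K, fun i hi p => ?_⟩
  rw [pow_mul, mul_assoc, ← mul_pow, norm_iteratedFDeriv_twist]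
  have htT : 1 + ‖twist θ p‖ ≤ (1 + 2 * |θ|) * (1 + ‖twist θ p‖) ^ 2 := by
    nlinarith [norm_nonneg (twist θ p), abs_nonneg θ]
  set T := (1 + 2 * |θ|) * (1 + ‖twist θ p‖) ^ 2
  have hpT : 1 + ‖p‖ ≤ T := one_add_norm_le_twist θ p
  have hp : 1 ≤ 1 + ‖p‖ := le_add_of_nonneg_right (norm_nonneg p)
  have bound : ∀ (c : ℝ) (k : ℕ) (s : ℝ), c ≤ C → k ≤ K → 1 ≤ s → s ≤ T →
      c * s ^ k ≤ C * T ^ K := fun c k s hc hk hs hsT =>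
    mul_le_mul hc ((pow_le_pow_left₀ (by linarith) hsT k).trans
      (pow_le_pow_right₀ (hs.trans hsT) hk)) (by positivity) (hC₁.trans (le_max_left _ _))
  refine max_le ((h₁ i hi p).trans ?_) (max_le ((h₂ i hi p).trans ?_) ((h₃ i hi p).trans ?_))
  · exact bound _ _ _ (le_max_left _ _) (by omega) hp hpT
  · exact bound _ _ _ ((le_max_left _ _).trans (le_max_right _ _)) (by omega) hp hpT
  · simpa using bound C₃ 1 _ ((le_max_right _ _).trans (le_max_right _ _)) (le_max_left _ _)
      (le_add_of_nonneg_right (norm_nonneg _)) htT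

end Twist

/-- pullback by the twisting map preserves the Schwartz space: for any
Schwartz function `f` in the variables `(a, v, ξ)` with `v ∈ ℝⁿ`, the function
`(a,v,ξ) ↦ f(a, v/cosh(θξ), sinh(2θξ)/(2θ))` is again Schwartz. -/
theorem twist_pullback_schwartz (n : ℕ) (θ : ℝ)
    (f : SchwartzMap (ℝ × EuclideanSpace ℝ (Fin n) × ℝ) ℂ) :
    ∃ g : SchwartzMap (ℝ × EuclideanSpace ℝ (Fin n) × ℝ) ℂ,
      ∀ p, g p = f (twist θ p) :=
  f.exists_eq_comp (contDiff_twist θ) (exists_norm_iteratedFDeriv_twist_le θ)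
    ⟨2, 1 + 2 * |θ|, one_add_norm_le_twist θ⟩
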